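/- Let φ be a 3-CNF formula and let V_φ be the 1-VASS with disequality tests constructed from φ as described. Then: (i) for every u ∈ {0,1,…,P−1}, the configuration (s_0,u) is bounded if and only if the assignment val_u satisfies φ; and (ii) the configuration (s_0,u) is unbounded for every u ∈ ℕ if and only if φ is unsatisfiable. -/

import Mathlib

/-!
From `s₀` the only runs are `s₀ → s_i → s_i → ⋯`, so the counter values met at `s_i` are
`u, u + c_i, u + 2 c_i, …`, and `(s₀, u)` is unbounded iff for some clause this progression
avoids every guard of `s_i`. Adding a multiple of `c_i` does not change `val` on the variables
of `C_i`. Hence if `val_u` falsifies `C_i` no guard is ever hit, while if `val_u` satisfies `C_i`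
and `u ≤ P`, the progression meets the window `[P, P + c_i)` of length `c_i`, where every
counter value is a guard. Finally every assignment is `val_u` for some `u ≤ P`, namely the
product of the primes of the true variables.
-/
namespace VASSPaper

/-- A 1-VASS with disequality tests: states `Q`, transition relation `delta`,
integer weights `w`, and for each state a cofinite set `D q ⊆ ℕ` of allowed counter values. -/
structure OneVASS (Q : Type) where
  delta : Q → Q → Prop
  w : Q → Q → ℤ
  D : Q → Set ℕ
  cofinite : ∀ q, (D q)ᶜ.Finite

variable {Q : Type}

/-- A path is a nonempty sequence of states joined by transitions. -/
def IsPath (V : OneVASS Q) : List Q → Prop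
  | [] => False
  | [_] => True
  | a :: b :: l => V.delta a b ∧ IsPath V (b :: l)

/-- The weight of a path: the sum of the weights of its transitions. -/
def pathWeight (V : OneVASS Q) (π : List Q) : ℤ :=
  (List.zipWith V.w π π.tail).sum

/-- The counter value at position `i` of the run over `π` starting with counter `z`. -/
def counterAt (V : OneVASS Q) (z : ℕ) (π : List Q) (i : ℕ) : ℤ :=
  (z : ℤ) + pathWeight V (π.take (i + 1))

/-- `π` lifts to a run from counter value `z`: all counter values stay nonnegative. -/
def IsRun (V : OneVASS Q) (π : List Q) (z : ℕ) : Prop :=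
  IsPath V π ∧ ∀ i, i < π.length → 0 ≤ counterAt V z π i

/-- A valid run additionally respects all disequality guards. -/
def IsValidRun (V : OneVASS Q) (π : List Q) (z : ℕ) : Prop :=
  IsRun V π z ∧ ∀ i, ∀ h : i < π.length, (counterAt V z π i).toNat ∈ V.D (π.get ⟨i, h⟩)

/-- `π` goes from configuration `c` to configuration `c'`. -/
def RunFromTo (V : OneVASS Q) (π : List Q) (c c' : Q × ℕ) : Prop :=
  π.head? = some c.1 ∧ π.getLast? = some c'.1 ∧ (c'.2 : ℤ) = (c.2 : ℤ) + pathWeight V π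

/-- `c'` is reachable from `c` by a valid run. -/
def Reaches (V : OneVASS Q) (c c' : Q × ℕ) : Prop :=
  ∃ π, IsValidRun V π c.2 ∧ RunFromTo V π c c'

/-- A configuration is unbounded if infinitely many configurations are reachable from it. -/
def Unbounded (V : OneVASS Q) (c : Q × ℕ) : Prop :=
  {c' | Reaches V c c'}.Infinite

/-- `(s,0)` covers the state `t`. -/
def Covers (V : OneVASS Q) (s t : Q) : Prop :=
  ∃ z, Reaches V (s, 0) (t, z)

/-- Every state has at most one disequality guard. -/
def SingleGuard (V : OneVASS Q) : Prop :=
  ∀ q, V.D q = Set.univ ∨ ∃ g : ℕ, V.D q = {g}ᶜ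

/-- The minimum weight of a (possibly empty) prefix of `π`. -/
def pmin (V : OneVASS Q) (π : List Q) : ℤ :=
  ((List.range (π.length + 1)).map fun i => pathWeight V (π.take i)).foldr min 0

/-- The maximum weight of a (possibly empty) suffix of `π`. -/
def smax (V : OneVASS Q) (π : List Q) : ℤ :=
  ((List.range (π.length + 1)).map fun i => pathWeight V (π.drop i)).foldr max 0

/-- A cycle on `q`: a path with at least one transition starting and ending at `q`. -/
def IsCycleOn (V : OneVASS Q) (π : List Q) (q : Q) : Prop :=
  IsPath V π ∧ 2 ≤ π.length ∧ π.head? = some q ∧ π.getLast? = some q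

/-- A simple cycle on `q`. -/
def IsSimpleCycleOn (V : OneVASS Q) (π : List Q) (q : Q) : Prop :=
  IsCycleOn V π q ∧ π.dropLast.Nodup

/-- The set of states lying on a positive-weight simple cycle. -/
def Qplus (V : OneVASS Q) : Set Q :=
  {q | ∃ π, IsSimpleCycleOn V π q ∧ 0 < pathWeight V π}

/-- `γ` is a valid choice of cycles: for each `q ∈ Q₊`, `γ q` is a simple positive cycle
on `q` whose `pmin` is maximal among all positive-weight simple cycles on `q`. -/
def GammaChoice (V : OneVASS Q) (γ : Q → List Q) : Prop :=
  ∀ q ∈ Qplus V,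
    IsSimpleCycleOn V (γ q) q ∧ 0 < pathWeight V (γ q) ∧
      ∀ π, IsSimpleCycleOn V π q → 0 < pathWeight V π → pmin V π ≤ pmin V (γ q)

/-- `Conf₊`: configurations `(q,z)` with `q ∈ Q₊` and `z + pmin (γ q) ≥ 0`. -/
def ConfPlus (V : OneVASS Q) (γ : Q → List Q) : Set (Q × ℕ) :=
  {c | c.1 ∈ Qplus V ∧ 0 ≤ (c.2 : ℤ) + pmin V (γ c.1)}

/-- `W_q`, the weight of the chosen cycle `γ q`, as a natural number. -/
def Wnat (V : OneVASS Q) (γ : Q → List Q) (q : Q) : ℕ :=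
  (pathWeight V (γ q)).toNat

/-- The `q`-residue class of `r` modulo `W_q`. -/
def resClass (V : OneVASS Q) (γ : Q → List Q) (q : Q) (r : ℕ) : Set (Q × ℕ) :=
  {c | c ∈ ConfPlus V γ ∧ c.1 = q ∧ c.2 % Wnat V γ q = r}

/-- `iterCycle π k` is the cycle `π` iterated `k+1` times. -/
def iterCycle (π : List Q) : ℕ → List Q
  | 0 => π
  | k + 1 => iterCycle π k ++ π.tail

/-- Counter values `z < z'` at state `q` are connected by a valid run iterating `γ q`. -/
def chainLinked (V : OneVASS Q) (γ : Q → List Q) (q : Q) (z z' : ℕ) : Prop :=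
  ∃ k, IsValidRun V (iterCycle (γ q) k) z ∧
    (z' : ℤ) = (z : ℤ) + pathWeight V (iterCycle (γ q) k)

/-- Any two configurations of `S` are connected by iterating `γ q`. -/
def ChainCond (V : OneVASS Q) (γ : Q → List Q) (q : Q) (S : Set (Q × ℕ)) : Prop :=
  ∀ c ∈ S, ∀ c' ∈ S, c.2 < c'.2 → chainLinked V γ q c.2 c'.2

/-- A `q`-chain inside the `q`-residue class of `r`: a maximal subset whose
configurations are pairwise connected by iterating `γ q`. -/
def IsChainIn (V : OneVASS Q) (γ : Q → List Q) (q : Q) (r : ℕ) (C : Set (Q × ℕ)) : Prop :=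
  C ⊆ resClass V γ q r ∧ ChainCond V γ q C ∧
    ∀ C', C ⊆ C' → C' ⊆ resClass V γ q r → ChainCond V γ q C' → C' = C

/-- A chain (in some residue class of some state of `Q₊`). -/
def IsChain (V : OneVASS Q) (γ : Q → List Q) (C : Set (Q × ℕ)) : Prop :=
  ∃ q r, q ∈ Qplus V ∧ r < Wnat V γ q ∧ IsChainIn V γ q r C

/-- A set of configurations is bounded if its counter values are bounded. -/
def chainBounded (C : Set (Q × ℕ)) : Prop :=
  BddAbove (Prod.snd '' C)

/-- A residue class is trivial if it consists of a single unbounded chain. -/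
def TrivialClass (V : OneVASS Q) (γ : Q → List Q) (q : Q) (r : ℕ) : Prop :=
  IsChainIn V γ q r (resClass V γ q r) ∧ ¬ chainBounded (resClass V γ q r)

/-- There is a valid run of length `k` (i.e. `k` transitions) from `c` into the set `S`. -/
def RunLenTo (V : OneVASS Q) (c : Q × ℕ) (S : Set (Q × ℕ)) (k : ℕ) : Prop :=
  ∃ π c', c' ∈ S ∧ IsValidRun V π c.2 ∧ RunFromTo V π c c' ∧ π.length = k + 1

/-- Configurations of `Conf₊ \ Un` whose distance to `Un` is minimal among all
configurations of `Conf₊ \ Un`. -/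
def Uprime (V : OneVASS Q) (γ : Q → List Q) (Un : Set (Q × ℕ)) : Set (Q × ℕ) :=
  {c | c ∈ ConfPlus V γ \ Un ∧
    ∃ k, RunLenTo V c Un k ∧
      ∀ c' ∈ ConfPlus V γ \ Un, ∀ j, RunLenTo V c' Un j → k ≤ j}

/-- `S` is downward closed in every chain. -/
def dcClosed (V : OneVASS Q) (γ : Q → List Q) (S : Set (Q × ℕ)) : Prop :=
  ∀ C, IsChain V γ C → ∀ c ∈ S ∩ C, ∀ c' ∈ C, c'.2 ≤ c.2 → c' ∈ S

/-- The inductive sequence `U_n`: `U_0` is the union of the unbounded chains; `U_{n+1}` is the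
smallest superset of `U_n ∪ U'_n` that is downward closed in every chain. -/
def U (V : OneVASS Q) (γ : Q → List Q) : ℕ → Set (Q × ℕ)
  | 0 => ⋃₀ {C | IsChain V γ C ∧ ¬ chainBounded C}
  | n + 1 => ⋂₀ {S | U V γ n ∪ Uprime V γ (U V γ n) ⊆ S ∧ dcClosed V γ S}

/-- `C` is an `n`-active bounded chain in the `q`-residue class of `r`. -/
def nActiveIn (V : OneVASS Q) (γ : Q → List Q) (q : Q) (r : ℕ) (n : ℕ)
    (C : Set (Q × ℕ)) : Prop :=
  IsChainIn V γ q r C ∧ chainBounded C ∧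
    ∃ c ∈ U V γ n ∩ resClass V γ q r, ∃ c' ∈ C, c.2 ≤ c'.2

/-- `δ_n(C)` for a `q`-chain `C`: configurations outside `U_n` whose counter value lies
between two counter values of `C \ U_n`. -/
def deltaC (V : OneVASS Q) (γ : Q → List Q) (n : ℕ) (q : Q) (C : Set (Q × ℕ)) :
    Set (Q × ℕ) :=
  {c | c ∈ ConfPlus V γ ∧ c.1 = q ∧ c ∉ U V γ n ∧
    ∃ z₁ z₂, (q, z₁) ∈ C \ U V γ n ∧ (q, z₂) ∈ C \ U V γ n ∧ z₁ ≤ c.2 ∧ c.2 ≤ z₂}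

/-- `δ_n(R)` for the `q`-residue class `R` of `r`: union of `δ_n(C)` over `n`-active chains. -/
def deltaR (V : OneVASS Q) (γ : Q → List Q) (n : ℕ) (q : Q) (r : ℕ) : Set (Q × ℕ) :=
  {c | ∃ C, nActiveIn V γ q r n C ∧ c ∈ deltaC V γ n q C}

/-- A positive-weight cycle (as a list of states). -/
def IsPosCycle (V : OneVASS Q) (π : List Q) : Prop :=
  2 ≤ π.length ∧ π.head? = π.getLast? ∧ 0 < pathWeight V π

/-- A path is primitive if no proper infix of it is a positive-weight cycle. -/
def Primitive (V : OneVASS Q) (π : List Q) : Prop :=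
  ∀ i l, (π.drop i).take l ≠ π → ¬ IsPosCycle V ((π.drop i).take l)


/-- The `i`-th prime (`nthPrime 0 = 2`). -/
noncomputable def nthPrime (i : ℕ) : ℕ := Nat.nth Nat.Prime i

/-- `P`, the product of the first `m` primes. -/
noncomputable def bigP (m : ℕ) : ℕ := ∏ i : Fin m, nthPrime i

/-- The assignment `val_u`: variable `X_i` is true iff `p_i ∣ u`. -/
def valAt (m : ℕ) (u : ℕ) : Fin m → Prop := fun i => nthPrime i ∣ u

/-- A 3-CNF formula with `m` variables and `n` clauses, each clause mentioning exactly three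
distinct variables `var i 0, var i 1, var i 2` with polarities `pol i j`. -/
structure CnfFormula (m n : ℕ) where
  var : Fin n → Fin 3 → Fin m
  pol : Fin n → Fin 3 → Bool
  distinct : ∀ i : Fin n, Function.Injective (var i)

/-- Satisfaction of a literal by an assignment. -/
def LitSat {m : ℕ} (v : Fin m → Prop) (x : Fin m) : Bool → Prop
  | true => v x
  | false => ¬ v x

/-- Satisfaction of the `i`-th clause. -/
def ClauseSat {m n : ℕ} (φ : CnfFormula m n) (v : Fin m → Prop) (i : Fin n) : Prop :=
  ∃ j : Fin 3, LitSat v (φ.var i j) (φ.pol i j)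

/-- Satisfaction of the whole formula. -/
def Satisfies {m n : ℕ} (φ : CnfFormula m n) (v : Fin m → Prop) : Prop :=
  ∀ i : Fin n, ClauseSat φ v i

/-- `c_i`: the product of the primes of the three variables of clause `i`. -/
noncomputable def clauseWeight {m n : ℕ} (φ : CnfFormula m n) (i : Fin n) : ℕ :=
  ∏ j : Fin 3, nthPrime (φ.var i j)

/-- The 1-VASS with disequality tests of Figure 1: state `none` is `s₀` with `D = ℕ` and a
weight-0 transition to each `s_i`; state `some i` is `s_i`, carrying a self-loop of weight
`c_i` and disequality guards at all `u ∈ [P, P + c_i)` such that `val_u` satisfies `C_i`. -/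
noncomputable def cnfVASS {m n : ℕ} (φ : CnfFormula m n) : OneVASS (Option (Fin n)) where
  delta a b :=
    match a, b with
    | none, some _ => True
    | some i, some j => i = j
    | _, _ => False
  w a b :=
    match a, b with
    | some i, some _ => (clauseWeight φ i : ℤ)
    | _, _ => 0
  D a :=
    match a with
    | none => Set.univ
    | some i =>
        {u | ¬ (bigP m ≤ u ∧ u < bigP m + clauseWeight φ i ∧ ClauseSat φ (valAt m u) i)}
  cofinite := by
    intro a
    match a with
    | none => simp
    | some i =>
        apply Set.Finite.subset (Set.finite_Ico (bigP m) (bigP m + clauseWeight φ i))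
        intro x hx
        simp only [Set.mem_compl_iff, Set.mem_setOf_eq, not_not] at hx
        exact Set.mem_Ico.mpr ⟨hx.1, hx.2.1⟩

lemma infinite_setOf_forall_le_iff {p : ℕ → Prop} :
    {k | ∀ j ≤ k, p j}.Infinite ↔ ∀ k, p k := by
  refine ⟨fun h k => ?_, fun h => ?_⟩
  · obtain ⟨k', hk', hkk'⟩ := h.exists_gt k
    exact hk' k hkk'.le
  · simpa [h] using Set.infinite_univ

lemma infinite_iUnion_iff_of_finite {ι α : Type*} [Finite ι] {s : ι → Set α} :
    (⋃ i, s i).Infinite ↔ ∃ i, (s i).Infinite := by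
  refine ⟨fun h => ?_, fun ⟨i, hi⟩ => hi.iUnion i⟩
  by_contra! hs
  exact h (Set.finite_iUnion hs)

lemma exists_add_mul_mem_Ico {a c u : ℕ} (hc : 0 < c) (hu : u < a + c) :
    ∃ k, u + k * c ∈ Set.Ico a (a + c) := by
  refine ⟨(a + c - 1 - u) / c, ?_, ?_⟩
  · have := Nat.lt_div_mul_add (a := a + c - 1 - u) hc
    omega
  · have := Nat.div_mul_le_self (a + c - 1 - u) c
    omega

section Paths

variable (V : OneVASS Q)

lemma pathWeight_cons_cons (a b : Q) (l : List Q) :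
    pathWeight V (a :: b :: l) = V.w a b + pathWeight V (b :: l) := rfl

lemma pathWeight_replicate (q : Q) (t : ℕ) :
    pathWeight V (List.replicate (t + 1) q) = t * V.w q q := by
  induction t with
  | zero => simp [pathWeight]
  | succ t ih =>
    rw [List.replicate_succ, List.replicate_succ, pathWeight_cons_cons, ← List.replicate_succ, ih]
    push_cast
    ring

lemma pathWeight_cons_replicate (p q : Q) (t : ℕ) :
    pathWeight V (p :: List.replicate (t + 1) q) = V.w p q + t * V.w q q := by
  rw [List.replicate_succ, pathWeight_cons_cons, ← List.replicate_succ, pathWeight_replicate]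

lemma getLast?_cons_replicate (p q : Q) (k : ℕ) :
    (p :: List.replicate (k + 1) q).getLast? = some q := by
  rw [List.replicate_succ', ← List.cons_append, List.getLast?_concat]

lemma counterAt_zero (z : ℕ) (a : Q) (l : List Q) : counterAt V z (a :: l) 0 = z := by
  simp [counterAt, pathWeight]

lemma counterAt_cons_replicate {j k : ℕ} (hj : j ≤ k) (z : ℕ) (p q : Q) :
    counterAt V z (p :: List.replicate (k + 1) q) (j + 1) = z + V.w p q + j * V.w q q := by
  rw [counterAt, List.take_succ_cons, List.take_replicate, min_eq_left (by omega),
    pathWeight_cons_replicate, add_assoc]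

lemma isPath_replicate {q : Q} (hq : V.delta q q) (t : ℕ) :
    IsPath V (List.replicate (t + 1) q) := by
  induction t with
  | zero => trivial
  | succ t ih =>
    rw [List.replicate_succ, List.replicate_succ]
    exact ⟨hq, ih⟩

lemma eq_replicate_of_isPath_cons {q : Q} (hq : ∀ b, V.delta q b → b = q) :
    ∀ l : List Q, IsPath V (q :: l) → q :: l = List.replicate (l.length + 1) q
  | [], _ => rfl
  | b :: l, ⟨hqb, hl⟩ => by
    obtain rfl := hq b hqb
    rw [eq_replicate_of_isPath_cons hq l hl]
    simp [List.replicate_succ]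

end Paths

section Reduction

variable {m n : ℕ} (φ : CnfFormula m n)

lemma clauseWeight_pos (i : Fin n) : 0 < clauseWeight φ i :=
  Finset.prod_pos fun _ _ => (Nat.prime_nth_prime _).pos

lemma mem_cnfVASS_D_some_iff (i : Fin n) (z : ℕ) :
    z ∈ (cnfVASS φ).D (some i) ↔
      ¬ (z ∈ Set.Ico (bigP m) (bigP m + clauseWeight φ i) ∧ ClauseSat φ (valAt m z) i) := by
  simp [cnfVASS, and_assoc]

lemma clauseSat_congr {v v' : Fin m → Prop} (i : Fin n)
    (h : ∀ j, v (φ.var i j) ↔ v' (φ.var i j)) :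
    ClauseSat φ v i ↔ ClauseSat φ v' i :=
  exists_congr fun j => by cases φ.pol i j <;> simp [LitSat, h]

lemma clauseSat_valAt_add_mul (i : Fin n) (u k : ℕ) :
    ClauseSat φ (valAt m (u + k * clauseWeight φ i)) i ↔ ClauseSat φ (valAt m u) i :=
  clauseSat_congr φ i fun j =>
    Nat.dvd_add_left ((Finset.dvd_prod_of_mem _ (Finset.mem_univ j)).mul_left k)

lemma isValidRun_cnfVASS_loop_iff (i : Fin n) (k u : ℕ) :
    IsValidRun (cnfVASS φ) (none :: List.replicate (k + 1) (some i)) u ↔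
      ∀ j ≤ k, u + j * clauseWeight φ i ∈ (cnfVASS φ).D (some i) := by
  have hcounter : ∀ j ≤ k, counterAt (cnfVASS φ) u (none :: List.replicate (k + 1) (some i))
      (j + 1) = ((u + j * clauseWeight φ i : ℕ) : ℤ) := fun j hj => by
    rw [counterAt_cons_replicate _ hj]
    simp [cnfVASS]
  constructor
  · rintro ⟨-, hD⟩ j hj
    have hj' := hD (j + 1) (by simp; omega)
    simp only [List.get_eq_getElem, List.getElem_cons_succ, List.getElem_replicate,
      hcounter j hj, Int.toNat_natCast] at hj'
    exact hj'
  · intro h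
    refine ⟨⟨⟨trivial, isPath_replicate _ rfl k⟩, ?_⟩, ?_⟩ <;>
      rintro (_ | j) hj <;> simp only [List.length_cons, List.length_replicate] at hj
    · simp [counterAt_zero]
    · rw [hcounter j (by omega)]
      positivity
    · exact Set.mem_univ _
    · simp only [List.get_eq_getElem, List.getElem_cons_succ, List.getElem_replicate,
        hcounter j (by omega), Int.toNat_natCast]
      exact h j (by omega)

lemma isPath_cnfVASS_none {l : List (Option (Fin n))} (hl : IsPath (cnfVASS φ) (none :: l)) :
    l = [] ∨ ∃ i k, l = List.replicate (k + 1) (some i) := by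
  match l, hl with
  | [], _ => exact Or.inl rfl
  | some i :: l, ⟨_, hl⟩ =>
    exact Or.inr ⟨i, l.length, eq_replicate_of_isPath_cons _ (fun b h => by
      cases b <;> simp_all [cnfVASS]) l hl⟩

lemma reaches_cnfVASS_none_iff (u : ℕ) (c : Option (Fin n) × ℕ) :
    Reaches (cnfVASS φ) (none, u) c ↔
      c = (none, u) ∨
        ∃ i k, (∀ j ≤ k, u + j * clauseWeight φ i ∈ (cnfVASS φ).D (some i)) ∧
        c = (some i, u + k * clauseWeight φ i) := by
  obtain ⟨q, z⟩ := c
  constructor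
  · rintro ⟨π, hvalid, hhead, hlast, hweight⟩
    obtain ⟨l, rfl⟩ : ∃ l, π = none :: l := by
      cases π <;> simp_all
    rcases isPath_cnfVASS_none φ hvalid.1.1 with rfl | ⟨i, k, rfl⟩
    · left
      simp_all [pathWeight]
    · right
      rw [getLast?_cons_replicate, Option.some_inj] at hlast
      rw [pathWeight_cons_replicate] at hweight
      simp only [cnfVASS, zero_add] at hweight
      exact ⟨i, k, (isValidRun_cnfVASS_loop_iff φ i k u).mp hvalid,
        Prod.ext hlast.symm (by exact_mod_cast hweight)⟩
  · rintro (h | ⟨i, k, hk, h⟩) <;> simp only [Prod.mk.injEq] at h <;>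
      obtain ⟨rfl, rfl⟩ := h
    · refine ⟨[none], ⟨⟨trivial, ?_⟩, ?_⟩, rfl, rfl, by simp [pathWeight]⟩ <;>
        rintro j hj <;> obtain rfl : j = 0 := by simpa using hj
      · simp [counterAt_zero]
      · exact Set.mem_univ _
    · refine ⟨_, (isValidRun_cnfVASS_loop_iff φ i k u).mpr hk, rfl, ?_, ?_⟩
      · exact getLast?_cons_replicate _ _ k
      · rw [pathWeight_cons_replicate]
        simp [cnfVASS]

lemma unbounded_cnfVASS_none_iff (u : ℕ) :
    Unbounded (cnfVASS φ) (none, u) ↔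
      ∃ i, ∀ k, u + k * clauseWeight φ i ∈ (cnfVASS φ).D (some i) := by
  have hreach : {c | Reaches (cnfVASS φ) (none, u) c} = insert (none, u)
      (⋃ i, (fun k => (some i, u + k * clauseWeight φ i)) ''
        {k | ∀ j ≤ k, u + j * clauseWeight φ i ∈ (cnfVASS φ).D (some i)}) := by
    ext c
    simp [reaches_cnfVASS_none_iff, eq_comm]
  have hinj (i : Fin n) :
      Function.Injective fun k => ((some i : Option (Fin n)), u + k * clauseWeight φ i) :=
    fun a b hab => Nat.eq_of_mul_eq_mul_right (clauseWeight_pos φ i) (by simpa using hab)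
  rw [Unbounded, hreach, Set.Infinite, Set.finite_insert, ← Set.Infinite,
    infinite_iUnion_iff_of_finite]
  exact exists_congr fun i => by
    rw [Set.infinite_image_iff (hinj i).injOn, infinite_setOf_forall_le_iff]

lemma add_mul_mem_D_of_not_clauseSat {i : Fin n} {u : ℕ} (h : ¬ ClauseSat φ (valAt m u) i)
    (k : ℕ) : u + k * clauseWeight φ i ∈ (cnfVASS φ).D (some i) := by
  rw [mem_cnfVASS_D_some_iff, clauseSat_valAt_add_mul]
  exact fun hk => h hk.2

lemma not_clauseSat_of_forall_add_mul_mem_D {i : Fin n} {u : ℕ}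
    (hu : u < bigP m + clauseWeight φ i)
    (h : ∀ k, u + k * clauseWeight φ i ∈ (cnfVASS φ).D (some i)) :
    ¬ ClauseSat φ (valAt m u) i := by
  intro hsat
  obtain ⟨k, hk⟩ := exists_add_mul_mem_Ico (clauseWeight_pos φ i) hu
  exact (mem_cnfVASS_D_some_iff φ i _).mp (h k)
    ⟨hk, (clauseSat_valAt_add_mul φ i u k).mpr hsat⟩

lemma unbounded_cnfVASS_of_not_satisfies {u : ℕ} (h : ¬ Satisfies φ (valAt m u)) :
    Unbounded (cnfVASS φ) (none, u) := by
  obtain ⟨i, hi⟩ := not_forall.mp h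
  exact (unbounded_cnfVASS_none_iff φ u).mpr ⟨i, add_mul_mem_D_of_not_clauseSat φ hi⟩

lemma unbounded_cnfVASS_iff_not_satisfies {u : ℕ} (hu : u ≤ bigP m) :
    Unbounded (cnfVASS φ) (none, u) ↔ ¬ Satisfies φ (valAt m u) := by
  refine ⟨fun h hsat => ?_, unbounded_cnfVASS_of_not_satisfies φ⟩
  obtain ⟨i, hi⟩ := (unbounded_cnfVASS_none_iff φ u).mp h
  have hc := clauseWeight_pos φ i
  exact not_clauseSat_of_forall_add_mul_mem_D φ (by omega) hi (hsat i)

end Reduction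

lemma nthPrime_dvd_prod_iff {m : ℕ} (s : Finset (Fin m)) (j : Fin m) :
    nthPrime j ∣ ∏ i ∈ s, nthPrime i ↔ j ∈ s := by
  refine ⟨fun h => ?_, fun h => Finset.dvd_prod_of_mem _ h⟩
  obtain ⟨a, ha, hdvd⟩ := ((Nat.prime_nth_prime j).prime.dvd_finsetProd_iff _).mp h
  have hja : nthPrime j = nthPrime a :=
    (Nat.prime_dvd_prime_iff_eq (Nat.prime_nth_prime _) (Nat.prime_nth_prime _)).mp hdvd
  rwa [Fin.ext (Nat.nth_injective Nat.infinite_setOfPred_prime hja)]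

lemma exists_le_bigP_valAt_eq {m : ℕ} (v : Fin m → Prop) : ∃ u ≤ bigP m, valAt m u = v := by
  classical
  refine ⟨∏ i ∈ Finset.univ.filter v, nthPrime i,
    Finset.prod_le_prod_of_subset_of_one_le' (Finset.filter_subset _ _)
      fun i _ _ => (Nat.prime_nth_prime i).one_lt.le,
    funext fun j => propext ?_⟩
  rw [valAt, nthPrime_dvd_prod_iff]
  simp

/-- (i) for `u < P`, `(s₀,u)` is bounded iff `val_u` satisfies `φ`;
(ii) `(s₀,u)` is unbounded for all `u` iff `φ` is unsatisfiable. -/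
theorem cnf_reduction_correct {m n : ℕ} (φ : CnfFormula m n) :
    (∀ u : ℕ, u < bigP m →
      (¬ Unbounded (cnfVASS φ) (none, u) ↔ Satisfies φ (valAt m u))) ∧
    ((∀ u : ℕ, Unbounded (cnfVASS φ) (none, u)) ↔
      ¬ ∃ v : Fin m → Prop, Satisfies φ v) := by
  refine ⟨fun u hu => by rw [unbounded_cnfVASS_iff_not_satisfies φ hu.le, not_not], ?_, ?_⟩
  · rintro hall ⟨v, hv⟩
    obtain ⟨u, hu, rfl⟩ := exists_le_bigP_valAt_eq v
    exact (unbounded_cnfVASS_iff_not_satisfies φ hu).mp (hall u) hv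
  · exact fun hunsat u => unbounded_cnfVASS_of_not_satisfies φ fun hsat => hunsat ⟨_, hsat⟩

end VASSPaper
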